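/- Let p be an odd prime, let m ≤ l be natural numbers, let λ be an invertible symmetric m×m matrix over 𝔽_p, and let T(λ) = fromBlocks λ 0 0 0 be the l×l matrix diag(λ, 0_{l−m}). Then the number of invertible γ ∈ GL_l(𝔽_p) with γᵀ · T(λ) · γ = T(λ) equals (the number of a ∈ GL_m(𝔽_p) with aᵀ · λ · a = λ) · p^{(l−m)·m} · (the number of elements of GL_{l−m}(𝔽_p)). -/
import Mathlib

open Matrix

private theorem aux_blocks {F : Type*} [Field F] {m k : ℕ}
    (lam : Matrix (Fin m) (Fin m) F) (hlam : IsUnit lam)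
    (M : Matrix (Fin m ⊕ Fin k) (Fin m ⊕ Fin k) F) (hM : IsUnit M)
    (h : Mᵀ * Matrix.fromBlocks lam 0 0 0 * M = Matrix.fromBlocks lam 0 0 0) :
    (M.toBlocks₁₁)ᵀ * lam * M.toBlocks₁₁ = lam ∧ M.toBlocks₁₂ = 0 ∧
      IsUnit M.toBlocks₁₁ ∧ IsUnit M.toBlocks₂₂ := by
  set A := M.toBlocks₁₁ with hA
  set B := M.toBlocks₁₂ with hB
  set C := M.toBlocks₂₁ with hC
  set D := M.toBlocks₂₂ with hD
  have hM' : M = fromBlocks A B C D := (fromBlocks_toBlocks M).symm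
  rw [hM'] at h
  rw [fromBlocks_transpose, fromBlocks_multiply, fromBlocks_multiply] at h
  simp only [Matrix.mul_zero, Matrix.zero_mul, add_zero, zero_add, Matrix.mul_one] at h
  have h11 : Aᵀ * lam * A = lam := by
    have := congrArg Matrix.toBlocks₁₁ h
    simpa [Matrix.toBlocks_fromBlocks₁₁] using this
  have h12 : Aᵀ * lam * B = 0 := by
    have := congrArg Matrix.toBlocks₁₂ h
    simpa [Matrix.toBlocks_fromBlocks₁₂] using this
  have hlamdet : IsUnit lam.det := (Matrix.isUnit_iff_isUnit_det lam).1 hlam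
  have hAdet : IsUnit A.det := by
    have hdet := congrArg Matrix.det h11
    rw [Matrix.det_mul, Matrix.det_mul, Matrix.det_transpose] at hdet
    have hAne : A.det ≠ 0 := by
      intro h0
      rw [h0, zero_mul, mul_zero] at hdet
      exact hlamdet.ne_zero hdet.symm
    exact hAne.isUnit
  have hAu : IsUnit A := (Matrix.isUnit_iff_isUnit_det A).2 hAdet
  have hATlam : IsUnit (Aᵀ * lam).det := by
    rw [Matrix.det_mul, Matrix.det_transpose]
    exact hAdet.mul hlamdet
  have hB0 : B = 0 := by
    calc B = ((Aᵀ * lam)⁻¹ * (Aᵀ * lam)) * B := by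
            rw [Matrix.nonsing_inv_mul _ hATlam, Matrix.one_mul]
      _ = (Aᵀ * lam)⁻¹ * (Aᵀ * lam * B) := by rw [Matrix.mul_assoc]
      _ = 0 := by rw [h12, Matrix.mul_zero]
  have hDu : IsUnit D := by
    have hMdet : IsUnit M.det := (Matrix.isUnit_iff_isUnit_det M).1 hM
    rw [hM', hB0, Matrix.det_fromBlocks_zero₁₂] at hMdet
    exact (Matrix.isUnit_iff_isUnit_det D).2 (isUnit_of_mul_isUnit_right hMdet)
  exact ⟨h11, hB0, hAu, hDu⟩

theorem stmt_1 (p : ℕ) (hp : p.Prime) (hp2 : p ≠ 2) (l m : ℕ) (hml : m ≤ l)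
    (lam : Matrix (Fin m) (Fin m) (ZMod p)) (hsym : lamᵀ = lam) (hlam : IsUnit lam) :
    Nat.card {γ : GL (Fin m ⊕ Fin (l - m)) (ZMod p) //
        (γ : Matrix (Fin m ⊕ Fin (l - m)) (Fin m ⊕ Fin (l - m)) (ZMod p))ᵀ *
          Matrix.fromBlocks lam 0 0 0 *
          (γ : Matrix (Fin m ⊕ Fin (l - m)) (Fin m ⊕ Fin (l - m)) (ZMod p)) =
          Matrix.fromBlocks lam 0 0 0} =
      Nat.card {a : GL (Fin m) (ZMod p) //
          (a : Matrix (Fin m) (Fin m) (ZMod p))ᵀ * lam *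
            (a : Matrix (Fin m) (Fin m) (ZMod p)) = lam} *
        p ^ ((l - m) * m) * Nat.card (GL (Fin (l - m)) (ZMod p)) := by
  haveI : Fact p.Prime := ⟨hp⟩
  set k := l - m with hk
  set T : Matrix (Fin m ⊕ Fin k) (Fin m ⊕ Fin k) (ZMod p) := Matrix.fromBlocks lam 0 0 0 with hT
  have key : ∀ (a : GL (Fin m) (ZMod p)) (C : Matrix (Fin k) (Fin m) (ZMod p))
      (d : GL (Fin k) (ZMod p)),
      IsUnit (Matrix.fromBlocks (a : Matrix (Fin m) (Fin m) (ZMod p)) 0 C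
        (d : Matrix (Fin k) (Fin k) (ZMod p))) := by
    intro a C d
    refine (Matrix.isUnit_iff_isUnit_det _).2 ?_
    rw [Matrix.det_fromBlocks_zero₁₂]
    exact (((Matrix.isUnit_iff_isUnit_det _).1 a.isUnit).mul
      ((Matrix.isUnit_iff_isUnit_det _).1 d.isUnit))
  let g : ({a : GL (Fin m) (ZMod p) //
        (a : Matrix (Fin m) (Fin m) (ZMod p))ᵀ * lam * (a : Matrix (Fin m) (Fin m) (ZMod p)) = lam} ×
        Matrix (Fin k) (Fin m) (ZMod p) × GL (Fin k) (ZMod p)) →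
      {γ : GL (Fin m ⊕ Fin k) (ZMod p) //
        (γ : Matrix (Fin m ⊕ Fin k) (Fin m ⊕ Fin k) (ZMod p))ᵀ * T *
          (γ : Matrix (Fin m ⊕ Fin k) (Fin m ⊕ Fin k) (ZMod p)) = T} :=
    fun x => ⟨(key x.1.1 x.2.1 x.2.2).unit, by
      have hs := (key x.1.1 x.2.1 x.2.2).unit_spec
      show ((key x.1.1 x.2.1 x.2.2).unit : Matrix _ _ (ZMod p))ᵀ * T *
        ((key x.1.1 x.2.1 x.2.2).unit : Matrix _ _ (ZMod p)) = T
      rw [hs, hT, fromBlocks_transpose, fromBlocks_multiply, fromBlocks_multiply]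
      simp only [Matrix.mul_zero, Matrix.zero_mul, add_zero, zero_add,
        Matrix.transpose_zero, x.1.2]⟩
  have hgbij : Function.Bijective g := by
    constructor
    · rintro ⟨a, C, d⟩ ⟨a', C', d'⟩ hxy
      have hmat := congrArg (fun z => ((z : {γ : GL (Fin m ⊕ Fin k) (ZMod p) //
          (γ : Matrix (Fin m ⊕ Fin k) (Fin m ⊕ Fin k) (ZMod p))ᵀ * T *
          (γ : Matrix (Fin m ⊕ Fin k) (Fin m ⊕ Fin k) (ZMod p)) = T}).1 :
          Matrix (Fin m ⊕ Fin k) (Fin m ⊕ Fin k) (ZMod p))) hxy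
      have hmm : Matrix.fromBlocks (a.1 : Matrix (Fin m) (Fin m) (ZMod p)) 0 C
            (d : Matrix (Fin k) (Fin k) (ZMod p)) =
          Matrix.fromBlocks (a'.1 : Matrix (Fin m) (Fin m) (ZMod p)) 0 C'
            (d' : Matrix (Fin k) (Fin k) (ZMod p)) := by
        simpa [g, (key a.1 C d).unit_spec, (key a'.1 C' d').unit_spec] using hmat
      have h1 : (a.1 : Matrix (Fin m) (Fin m) (ZMod p)) = (a'.1 : Matrix (Fin m) (Fin m) (ZMod p)) := by
        have := congrArg Matrix.toBlocks₁₁ hmm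
        simpa [Matrix.toBlocks_fromBlocks₁₁] using this
      have h2 : C = C' := by
        have := congrArg Matrix.toBlocks₂₁ hmm
        simpa [Matrix.toBlocks_fromBlocks₂₁] using this
      have h3 : (d : Matrix (Fin k) (Fin k) (ZMod p)) = (d' : Matrix (Fin k) (Fin k) (ZMod p)) := by
        have := congrArg Matrix.toBlocks₂₂ hmm
        simpa [Matrix.toBlocks_fromBlocks₂₂] using this
      exact Prod.ext (Subtype.ext (Units.ext h1)) (Prod.ext h2 (Units.ext h3))
    · rintro ⟨γ, hγ⟩
      obtain ⟨h11, hB0, hAu, hDu⟩ := aux_blocks lam hlam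
        (γ : Matrix (Fin m ⊕ Fin k) (Fin m ⊕ Fin k) (ZMod p)) γ.isUnit hγ
      set A := (γ : Matrix (Fin m ⊕ Fin k) (Fin m ⊕ Fin k) (ZMod p)).toBlocks₁₁
      set C := (γ : Matrix (Fin m ⊕ Fin k) (Fin m ⊕ Fin k) (ZMod p)).toBlocks₂₁
      set D := (γ : Matrix (Fin m ⊕ Fin k) (Fin m ⊕ Fin k) (ZMod p)).toBlocks₂₂
      refine ⟨⟨⟨hAu.unit, ?_⟩, C, hDu.unit⟩, ?_⟩
      · show ((hAu.unit : Matrix (Fin m) (Fin m) (ZMod p)))ᵀ * lam *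
          (hAu.unit : Matrix (Fin m) (Fin m) (ZMod p)) = lam
        rw [hAu.unit_spec]; exact h11
      · apply Subtype.ext
        apply Units.ext
        show ((key hAu.unit C hDu.unit).unit : Matrix _ _ (ZMod p)) =
          (γ : Matrix (Fin m ⊕ Fin k) (Fin m ⊕ Fin k) (ZMod p))
        rw [(key hAu.unit C hDu.unit).unit_spec, hAu.unit_spec, hDu.unit_spec]
        conv_rhs => rw [← fromBlocks_toBlocks (γ : Matrix (Fin m ⊕ Fin k) (Fin m ⊕ Fin k) (ZMod p))]
        rw [hB0]
  rw [← Nat.card_eq_of_bijective g hgbij, Nat.card_prod, Nat.card_prod]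
  have hmatcard : Nat.card (Matrix (Fin k) (Fin m) (ZMod p)) = p ^ (k * m) := by
    have h1 : Nat.card (Matrix (Fin k) (Fin m) (ZMod p)) = Nat.card (Fin k → Fin m → ZMod p) :=
      Nat.card_congr Matrix.of.symm
    rw [h1, Nat.card_fun, Nat.card_fun]
    simp [Nat.card_eq_fintype_card, ZMod.card, ← pow_mul, mul_comm]
  rw [hmatcard]; ring
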